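/- For probability measures P ≪ Q, the supremum over bounded measurable functions T of E_P[T] − log E_Q[exp(T)] equals D_KL(P‖Q). -/

import Mathlib

/-!
Upper bound: for `T` with `e^T` integrable, the tilted measure `Q_T = e^T Q / E_Q[e^T]` is a probability
measure with `P ≪ Q_T` and `log dP/dQ_T = log dP/dQ - T + log E_Q[e^T]`, so Gibbs' inequality
`D_KL(P‖Q_T) ≥ 0` is exactly `E_P[T] - log E_Q[e^T] ≤ D_KL(P‖Q)`.

Lower bound: the truncations `T_n` of `log dP/dQ` to `[-n, n]` satisfy `E_P[T_n] → D_KL(P‖Q)`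
and `E_Q[e^{T_n}] → E_Q[dP/dQ] = 1` by dominated convergence.
-/

open MeasureTheory InformationTheory Real Filter Topology

/-- Clamping `x` to `[e^{-n}, e^n]` before taking the logarithm gives `truncLog n 0 = -n` instead of
the junk value `log 0 = 0`, so that `exp (truncLog n x) → x` also at `x = 0`. -/
noncomputable def truncLog (n : ℕ) (x : ℝ) : ℝ :=
  log (max (exp (-n)) (min x (exp n)))

section truncLog

variable {n : ℕ} {x : ℝ}

lemma exp_truncLog : exp (truncLog n x) = max (exp (-n)) (min x (exp n)) :=
  exp_log ((exp_pos _).trans_le (le_max_left _ _))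

lemma abs_truncLog_le : |truncLog n x| ≤ n := by
  have hn : exp (-(n : ℝ)) ≤ exp n := exp_le_exp.2 (by linarith [n.cast_nonneg (α := ℝ)])
  rw [abs_le, ← exp_le_exp, ← exp_le_exp (y := (n : ℝ)), exp_truncLog]
  exact ⟨le_max_left _ _, max_le hn (min_le_right _ _)⟩

lemma measurable_truncLog : Measurable (truncLog n) := by
  unfold truncLog; fun_prop

lemma truncLog_eventually_eq_log (hx : 0 < x) : ∀ᶠ n : ℕ in atTop, truncLog n x = log x := by
  filter_upwards [eventually_ge_atTop ⌈|log x|⌉₊] with n hn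
  have hlog : |log x| ≤ n := (Nat.le_ceil _).trans (Nat.cast_le.2 hn)
  rw [abs_le] at hlog
  have h_lo : exp (-n) ≤ x := by simpa [exp_log hx] using exp_le_exp.2 hlog.1
  have h_hi : x ≤ exp n := by simpa [exp_log hx] using exp_le_exp.2 hlog.2
  rw [truncLog, min_eq_left h_hi, max_eq_right h_lo]

lemma abs_truncLog_le_abs_log (hx : 0 < x) : |truncLog n x| ≤ |log x| := by
  have h_lo : exp (-(n : ℝ)) ≤ 1 := exp_le_one_iff.2 (by simp)
  have h_hi : 1 ≤ exp (n : ℝ) := one_le_exp (by simp)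
  rcases le_total x 1 with hx1 | hx1
  · have h : truncLog n x = log (max (exp (-n)) x) := by rw [truncLog, min_eq_left (hx1.trans h_hi)]
    rw [h, abs_of_nonpos ((log_nonpos_iff hx.le).2 hx1), abs_of_nonpos]
    · exact neg_le_neg (log_le_log hx (le_max_right _ _))
    · exact log_nonpos (by positivity) (max_le h_lo hx1)
  · have h : truncLog n x = log (min x (exp n)) := by
      rw [truncLog, max_eq_right (h_lo.trans (le_min hx1 h_hi))]
    rw [h, abs_of_nonneg (log_nonneg hx1), abs_of_nonneg (log_nonneg (le_min hx1 h_hi))]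
    exact log_le_log (zero_lt_one.trans_le (le_min hx1 h_hi)) (min_le_left _ _)

lemma exp_truncLog_le (hx : 0 ≤ x) : exp (truncLog n x) ≤ x + 1 := by
  rw [exp_truncLog]
  exact max_le (by linarith [exp_le_one_iff.2 (neg_nonpos.2 (Nat.cast_nonneg n : (0 : ℝ) ≤ n))])
    (by linarith [min_le_left x (exp n)])

lemma tendsto_exp_truncLog (hx : 0 ≤ x) :
    Tendsto (fun n : ℕ => exp (truncLog n x)) atTop (𝓝 x) := by
  have h_exp : Tendsto (fun n : ℕ => exp (-(n : ℝ))) atTop (𝓝 0) :=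
    tendsto_exp_atBot.comp (tendsto_neg_atTop_atBot.comp tendsto_natCast_atTop_atTop)
  have h_max := h_exp.max (tendsto_const_nhds (x := x))
  rw [max_eq_right hx] at h_max
  refine h_max.congr' ?_
  filter_upwards [(tendsto_exp_atTop.comp tendsto_natCast_atTop_atTop).eventually_ge_atTop x]
    with n (hn : x ≤ exp n)
  rw [exp_truncLog, min_eq_left hn]

end truncLog

section Integrals

variable {Ω : Type*} [MeasurableSpace Ω]

lemma tendsto_integral_truncLog {μ : Measure Ω} {f : Ω → ℝ} (hf : Measurable f)
    (hf_pos : ∀ᵐ ω ∂μ, 0 < f ω) (h_int : Integrable (fun ω => log (f ω)) μ) :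
    Tendsto (fun n : ℕ => ∫ ω, truncLog n (f ω) ∂μ) atTop (𝓝 (∫ ω, log (f ω) ∂μ)) := by
  refine tendsto_integral_of_dominated_convergence (fun ω => |log (f ω)|)
    (fun n => (measurable_truncLog.comp hf).aestronglyMeasurable) h_int.abs
    (fun n => ?_) ?_
  · filter_upwards [hf_pos] with ω hω
    exact abs_truncLog_le_abs_log hω
  · filter_upwards [hf_pos] with ω hω
    exact tendsto_nhds_of_eventually_eq (truncLog_eventually_eq_log hω)

lemma tendsto_integral_exp_truncLog {μ : Measure Ω} [IsFiniteMeasure μ] {f : Ω → ℝ}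
    (hf : Measurable f) (hf_nonneg : ∀ ω, 0 ≤ f ω) (h_int : Integrable f μ) :
    Tendsto (fun n : ℕ => ∫ ω, exp (truncLog n (f ω)) ∂μ) atTop (𝓝 (∫ ω, f ω ∂μ)) := by
  refine tendsto_integral_of_dominated_convergence (fun ω => f ω + 1)
    (fun n => (measurable_truncLog.comp hf).exp.aestronglyMeasurable)
    (h_int.add (integrable_const 1)) (fun n => ae_of_all _ fun ω => ?_)
    (ae_of_all _ fun ω => tendsto_exp_truncLog (hf_nonneg ω))
  rw [norm_of_nonneg (exp_pos _).le]
  exact exp_truncLog_le (hf_nonneg ω)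

variable {P Q : Measure Ω} [IsProbabilityMeasure P] [IsProbabilityMeasure Q]

lemma integral_sub_log_integral_exp_le_integral_llr (hPQ : P ≪ Q)
    (h_llr : Integrable (llr P Q) P) {T : Ω → ℝ} (hTP : Integrable T P)
    (hTQ : Integrable (fun ω => exp (T ω)) Q) :
    ∫ ω, T ω ∂P - log (∫ ω, exp (T ω) ∂Q) ≤ ∫ ω, llr P Q ω ∂P := by
  have hPQ_T : P ≪ Q.tilted T := hPQ.trans (absolutelyContinuous_tilted hTQ)
  have := isProbabilityMeasure_tilted hTQ
  have h_gibbs := integral_llr_add_sub_measure_univ_nonneg hPQ_T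
    (integrable_llr_tilted_right hPQ hTP h_llr hTQ)
  rw [integral_llr_tilted_right hPQ hTP hTQ h_llr] at h_gibbs
  simp only [probReal_univ] at h_gibbs
  linarith

lemma tendsto_integral_truncLog_sub_log_integral_exp (hPQ : P ≪ Q)
    (h_llr : Integrable (llr P Q) P) :
    Tendsto (fun n : ℕ => ∫ ω, truncLog n (P.rnDeriv Q ω).toReal ∂P
      - log (∫ ω, exp (truncLog n (P.rnDeriv Q ω).toReal) ∂Q)) atTop
      (𝓝 (∫ ω, llr P Q ω ∂P)) := by
  have hf : Measurable fun ω => (P.rnDeriv Q ω).toReal :=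
    (Measure.measurable_rnDeriv P Q).ennreal_toReal
  have hf_pos : ∀ᵐ ω ∂P, 0 < (P.rnDeriv Q ω).toReal := by
    filter_upwards [Measure.rnDeriv_pos hPQ, hPQ.ae_le (Measure.rnDeriv_lt_top P Q)] with ω h0 htop
    exact ENNReal.toReal_pos h0.ne' htop.ne
  have h_exp := tendsto_integral_exp_truncLog hf (fun ω => ENNReal.toReal_nonneg)
    Measure.integrable_toReal_rnDeriv (μ := Q)
  rw [Measure.integral_toReal_rnDeriv hPQ, probReal_univ] at h_exp
  have h := (tendsto_integral_truncLog hf hf_pos h_llr).sub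
    ((continuousAt_log one_ne_zero).tendsto.comp h_exp)
  rwa [log_one, sub_zero] at h

end Integrals

/-- Donsker–Varadhan representation: the supremum over bounded measurable `T` of
`E_P[T] - log E_Q[exp T]` equals `D_KL(P‖Q) = E_P[log dP/dQ]`, assuming `P ≪ Q`
and the KL divergence is finite (the log-density is `P`-integrable). -/
theorem stmt_1 {Ω : Type*} [MeasurableSpace Ω] (P Q : Measure Ω)
    [IsProbabilityMeasure P] [IsProbabilityMeasure Q] (hPQ : P ≪ Q)
    (hKL : Integrable (fun ω => Real.log ((P.rnDeriv Q ω).toReal)) P) :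
    sSup {v : ℝ | ∃ T : Ω → ℝ, Measurable T ∧ (∃ C : ℝ, ∀ ω, |T ω| ≤ C) ∧
        v = (∫ ω, T ω ∂P) - Real.log (∫ ω, Real.exp (T ω) ∂Q)} =
      ∫ ω, Real.log ((P.rnDeriv Q ω).toReal) ∂P := by
  set S := {v : ℝ | ∃ T : Ω → ℝ, Measurable T ∧ (∃ C : ℝ, ∀ ω, |T ω| ≤ C) ∧
    v = (∫ ω, T ω ∂P) - Real.log (∫ ω, Real.exp (T ω) ∂Q)}
  have h_le : ∀ v ∈ S, v ≤ ∫ ω, llr P Q ω ∂P := by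
    rintro _ ⟨T, hT, ⟨C, hC⟩, rfl⟩
    refine integral_sub_log_integral_exp_le_integral_llr hPQ hKL
      (.of_bound hT.aestronglyMeasurable C (ae_of_all _ hC))
      (.of_bound hT.exp.aestronglyMeasurable (exp C) (ae_of_all _ fun ω => ?_))
    rw [norm_of_nonneg (exp_pos _).le]
    exact exp_le_exp.2 ((le_abs_self _).trans (hC ω))
  have h_mem : ∀ n : ℕ, ∫ ω, truncLog n (P.rnDeriv Q ω).toReal ∂P
      - log (∫ ω, exp (truncLog n (P.rnDeriv Q ω).toReal) ∂Q) ∈ S := fun n =>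
    ⟨_, measurable_truncLog.comp (Measure.measurable_rnDeriv P Q).ennreal_toReal,
      ⟨n, fun ω => abs_truncLog_le⟩, rfl⟩
  refine le_antisymm (csSup_le ⟨_, h_mem 0⟩ h_le) ?_
  exact le_of_tendsto' (tendsto_integral_truncLog_sub_log_integral_exp hPQ hKL)
    fun n => le_csSup ⟨_, h_le⟩ (h_mem n)
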